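/- For any words u and v, if u is Knuth equivalent to v, then the insertion tableau (P-symbol) obtained by row-insertion (bumping) of u equals that of v. -/

import Mathlib

/-- Elementary Knuth transformations on consecutive triples of letters:
`y z x → y x z` when `x < y ≤ z`, and `x z y → z x y` when `x ≤ y < z`. -/
inductive KnuthStep : List ℕ → List ℕ → Prop
  | k1 (u v : List ℕ) (x y z : ℕ) (h1 : x < y) (h2 : y ≤ z) :
      KnuthStep (u ++ y :: z :: x :: v) (u ++ y :: x :: z :: v)
  | k2 (u v : List ℕ) (x y z : ℕ) (h1 : x ≤ y) (h2 : y < z) :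
      KnuthStep (u ++ x :: z :: y :: v) (u ++ z :: x :: y :: v)

/-- Knuth equivalence: the equivalence relation generated by the elementary
Knuth transformations. -/
def KnuthEquiv : List ℕ → List ℕ → Prop := Relation.EqvGen KnuthStep

/-- Schensted row-insertion of `x` into a single row: returns the new row and
the bumped letter (if any). -/
def insertRow : List ℕ → ℕ → List ℕ × Option ℕ
  | [], x => ([x], none)
  | y :: r, x =>
      if x < y then (x :: r, some y)
      else
        let p := insertRow r x
        (y :: p.1, p.2)

/-- Row-insertion of a letter into a tableau (list of rows, top row first). -/
def insertTableau : List (List ℕ) → ℕ → List (List ℕ)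
  | [], x => [[x]]
  | r :: t, x =>
      let p := insertRow r x
      match p.2 with
      | none => p.1 :: t
      | some y => p.1 :: insertTableau t y

/-- The insertion tableau (P-symbol) of a word, obtained by row-inserting its
letters from left to right into the empty tableau. -/
def Tab (w : List ℕ) : List (List ℕ) := w.foldl insertTableau []

open List

lemma insertRow_mem {r : List ℕ} {x b : ℕ} (h : b ∈ (insertRow r x).1) : b = x ∨ b ∈ r := by
  induction r with
  | nil => simp [insertRow] at h; tauto
  | cons a r ih =>
    by_cases hxa : x < a
    · simp [insertRow, hxa] at h; tauto
    · simp [insertRow, hxa] at h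
      rcases h with h | h
      · right; simp [h]
      · rcases ih h with h | h
        · tauto
        · right; simp [h]

lemma insertRow_self_mem (r : List ℕ) (x : ℕ) : x ∈ (insertRow r x).1 := by
  induction r with
  | nil => simp [insertRow]
  | cons a r ih => by_cases hxa : x < a <;> simp [insertRow, hxa] <;> tauto

lemma insertRow_bump_gt {r : List ℕ} {x c : ℕ} (h : (insertRow r x).2 = some c) : x < c := by
  induction r with
  | nil => simp [insertRow] at h
  | cons a r ih =>
    by_cases hxa : x < a <;> simp [insertRow, hxa] at h
    · omega
    · exact ih h

lemma insertRow_bump_mem {r : List ℕ} {x c : ℕ} (h : (insertRow r x).2 = some c) : c ∈ r := by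
  induction r with
  | nil => simp [insertRow] at h
  | cons a r ih =>
    by_cases hxa : x < a <;> simp [insertRow, hxa] at h
    · simp [h]
    · simp [ih h]

lemma insertRow_sorted {r : List ℕ} (hr : r.Pairwise (· ≤ ·)) (x : ℕ) :
    ((insertRow r x).1).Pairwise (· ≤ ·) := by
  induction r with
  | nil => simp [insertRow]
  | cons a r ih =>
    rw [pairwise_cons] at hr
    by_cases hxa : x < a <;> simp [insertRow, hxa, pairwise_cons]
    · exact ⟨fun b hb => le_of_lt (lt_of_lt_of_le hxa (hr.1 b hb)), hr.2⟩
    · refine ⟨fun b hb => ?_, ih hr.2⟩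
      rcases insertRow_mem hb with h | h
      · omega
      · exact hr.1 b h

lemma insertRow_bump_le {r : List ℕ} (hr : r.Pairwise (· ≤ ·)) {x c : ℕ} (hc : c ∈ r)
    (hx : x < c) : ∃ e, (insertRow r x).2 = some e ∧ e ≤ c := by
  induction r with
  | nil => simp at hc
  | cons a r ih =>
    rw [pairwise_cons] at hr
    by_cases hxa : x < a
    · refine ⟨a, by simp [insertRow, hxa], ?_⟩
      rcases mem_cons.1 hc with h | h
      · omega
      · exact hr.1 c h
    · have : c ∈ r := by rcases mem_cons.1 hc with h | h; omega; exact h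
      obtain ⟨e, he, hle⟩ := ih hr.2 this
      exact ⟨e, by simp [insertRow, hxa, he], hle⟩

lemma row2 {r : List ℕ} (hr : r.Pairwise (· ≤ ·)) {y z c : ℕ} (hyz : y ≤ z)
    (h : (insertRow (insertRow r y).1 z).2 = some c) :
    ∃ b, (insertRow r y).2 = some b ∧ b ≤ c := by
  induction r with
  | nil =>
    exfalso
    have : ¬ z < y := by omega
    simp [insertRow, this] at h
  | cons a r ih =>
    rw [pairwise_cons] at hr
    by_cases hya : y < a
    · have hza : ¬ z < y := by omega
      simp [insertRow, hya, hza] at h ⊢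
      have := insertRow_bump_mem h
      have := insertRow_bump_gt h
      exact hr.1 c (insertRow_bump_mem h)
    · have hza : ¬ z < a := by omega
      simp [insertRow, hya, hza] at h ⊢
      exact ih hr.2 h

def rowIns : List ℕ → List ℕ → List ℕ × List ℕ
  | r, [] => (r, [])
  | r, a :: l =>
      let p := insertRow r a
      let q := rowIns p.1 l
      (q.1, p.2.elim q.2 (· :: q.2))

def WordRel (w w' : List ℕ) : Prop :=
  w = w' ∨
  (∃ x y z, x < y ∧ y ≤ z ∧ w = [y, z, x] ∧ w' = [y, x, z]) ∨
  (∃ x y z, x ≤ y ∧ y < z ∧ w = [x, z, y] ∧ w' = [z, x, y])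

lemma rowIns_cons_le {a : ℕ} {w : List ℕ} (hw : ∀ b ∈ w, ¬ b < a) :
    ∀ r : List ℕ, rowIns (a :: r) w = (a :: (rowIns r w).1, (rowIns r w).2) := by
  induction w with
  | nil => intro r; rfl
  | cons b w ih =>
    intro r
    have hba : ¬ b < a := hw b (by simp)
    simp only [rowIns, insertRow, if_neg hba]
    rw [ih (fun c hc => hw c (by simp [hc]))]

lemma rowK1 : ∀ r : List ℕ, r.Pairwise (· ≤ ·) → ∀ x y z : ℕ, x < y → y ≤ z →
    (rowIns r [y, z, x]).1 = (rowIns r [y, x, z]).1 ∧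
    WordRel (rowIns r [y, z, x]).2 (rowIns r [y, x, z]).2 := by
  intro r
  induction r with
  | nil =>
    intro _ x y z hxy hyz
    have h1 : ¬ z < y := by omega
    have h2 : ¬ z < x := by omega
    simp [rowIns, insertRow, h1, h2, hxy, WordRel]
  | cons a r ih =>
    intro hr x y z hxy hyz
    rw [pairwise_cons] at hr
    by_cases hya : y < a
    · have hxa : x < a := by omega
      have hzy : ¬ z < y := by omega
      have hzx : ¬ z < x := by omega
      rcases hb : (insertRow r z).2 with _ | c
      · simp [rowIns, insertRow, hya, hxy, hzy, hzx, hb, WordRel]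
      · have hc : c ∈ r := insertRow_bump_mem hb
        have hac : a ≤ c := hr.1 c hc
        simp only [rowIns, insertRow, if_pos hya, if_pos hxy, if_neg hzy, if_neg hzx, hb]
        refine ⟨trivial, Or.inr (Or.inl ⟨y, a, c, hya, hac, by simp [hb], by simp [hb]⟩)⟩
    · by_cases hxa : x < a
      · have hza : ¬ z < a := by omega
        have hzx : ¬ z < x := by omega
        rcases hb : (insertRow (insertRow r y).1 z).2 with _ | c
        · simp [rowIns, insertRow, hya, hxa, hza, hzx, hb, WordRel]
        · obtain ⟨b, hb1, hbc⟩ := row2 hr.2 hyz hb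
          have hyb : y < b := insertRow_bump_gt hb1
          have hab : a < b := by omega
          simp only [rowIns, insertRow, if_neg hya, if_pos hxa, if_neg hza, if_neg hzx, hb, hb1]
          exact ⟨trivial, Or.inr (Or.inl ⟨a, b, c, hab, hbc, by simp, by simp⟩)⟩
      · have hall : ∀ b ∈ [y, z, x], ¬ b < a := by intro b hb; simp at hb; omega
        have hall' : ∀ b ∈ [y, x, z], ¬ b < a := by intro b hb; simp at hb; omega
        rw [rowIns_cons_le hall, rowIns_cons_le hall']
        obtain ⟨h1, h2⟩ := ih hr.2 x y z hxy hyz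
        exact ⟨by rw [h1], h2⟩

lemma rowK2 : ∀ r : List ℕ, r.Pairwise (· ≤ ·) → ∀ x y z : ℕ, x ≤ y → y < z →
    (rowIns r [x, z, y]).1 = (rowIns r [z, x, y]).1 ∧
    WordRel (rowIns r [x, z, y]).2 (rowIns r [z, x, y]).2 := by
  intro r
  induction r with
  | nil =>
    intro _ x y z hxy hyz
    have h1 : ¬ z < x := by omega
    have h2 : ¬ y < x := by omega
    have h3 : x < z := by omega
    have h4 : y < z := hyz
    simp [rowIns, insertRow, h1, h2, h3, h4, WordRel]
  | cons a r ih =>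
    intro hr x y z hxy hyz
    rw [pairwise_cons] at hr
    by_cases hza : z < a
    · have hxa : x < a := by omega
      have hzx : ¬ z < x := by omega
      have hyx : ¬ y < x := by omega
      have hxz : x < z := by omega
      have hyz' : y < z := hyz
      match r with
      | [] =>
        simp [rowIns, insertRow, hza, hxa, hzx, hyx, hxz, hyz', WordRel]
      | d :: r' =>
        have had : a ≤ d := hr.1 d (by simp)
        have hzd : z < d := by omega
        have hyd : y < d := by omega
        simp only [rowIns, insertRow, if_pos hza, if_pos hxa, if_neg hzx, if_neg hyx,
          if_pos hxz, if_pos hyz', if_pos hzd, if_pos hyd]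
        exact ⟨trivial, Or.inr (Or.inl ⟨z, a, d, hza, had, by simp, by simp⟩)⟩
    · by_cases hxa : x < a
      · have hzx : ¬ z < x := by omega
        have hyx : ¬ y < x := by omega
        rcases hb : (insertRow r z).2 with _ | c
        · simp [rowIns, insertRow, hza, hxa, hzx, hyx, hb, WordRel]
        · have hzc : z < c := insertRow_bump_gt hb
          have hzmem : z ∈ (insertRow r z).1 := insertRow_self_mem r z
          obtain ⟨e, he, hez⟩ := insertRow_bump_le (insertRow_sorted hr.2 z) hzmem hyz
          have hec : e < c := by omega
          have hae : a ≤ e := by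
            rcases insertRow_mem (insertRow_bump_mem he) with h | h
            · omega
            · exact hr.1 e h
          simp only [rowIns, insertRow, if_neg hza, if_pos hxa, if_neg hzx, if_neg hyx, hb, he]
          exact ⟨trivial, Or.inr (Or.inr ⟨a, e, c, hae, hec, by simp, by simp⟩)⟩
      · have hall : ∀ b ∈ [x, z, y], ¬ b < a := by intro b hb; simp at hb; omega
        have hall' : ∀ b ∈ [z, x, y], ¬ b < a := by intro b hb; simp at hb; omega
        rw [rowIns_cons_le hall, rowIns_cons_le hall']
        obtain ⟨h1, h2⟩ := ih hr.2 x y z hxy hyz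
        exact ⟨by rw [h1], h2⟩

lemma foldl_cons : ∀ (w : List ℕ) (r : List ℕ) (t : List (List ℕ)),
    w.foldl insertTableau (r :: t) = (rowIns r w).1 :: (rowIns r w).2.foldl insertTableau t := by
  intro w
  induction w with
  | nil => intros; rfl
  | cons a w ih =>
    intro r t
    simp only [List.foldl_cons]
    rcases hb : (insertRow r a).2 with _ | c
    · rw [show insertTableau (r :: t) a = (insertRow r a).1 :: t from by simp [insertTableau, hb]]
      rw [ih]; simp [rowIns, hb]
    · rw [show insertTableau (r :: t) a = (insertRow r a).1 :: insertTableau t c from by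
        simp [insertTableau, hb]]
      rw [ih]; simp [rowIns, hb]

lemma key : ∀ t : List (List ℕ), (∀ r ∈ t, r.Pairwise (· ≤ ·)) →
    (∀ x y z : ℕ, x < y → y ≤ z →
      [y, z, x].foldl insertTableau t = [y, x, z].foldl insertTableau t) ∧
    (∀ x y z : ℕ, x ≤ y → y < z →
      [x, z, y].foldl insertTableau t = [z, x, y].foldl insertTableau t) := by
  intro t
  induction t with
  | nil =>
    intro _
    constructor
    · intro x y z hxy hyz
      have h1 : ¬ z < y := by omega
      have h2 : ¬ z < x := by omega
      simp [insertTableau, insertRow, h1, h2, hxy]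
    · intro x y z hxy hyz
      have h1 : ¬ z < x := by omega
      have h2 : ¬ y < x := by omega
      have h3 : x < z := by omega
      simp [insertTableau, insertRow, h1, h2, h3, hyz]
  | cons r t ih =>
    intro hg
    have hr : r.Pairwise (· ≤ ·) := hg r (by simp)
    have hgt : ∀ s ∈ t, s.Pairwise (· ≤ ·) := fun s hs => hg s (by simp [hs])
    constructor
    · intro x y z hxy hyz
      rw [_root_.foldl_cons, _root_.foldl_cons]
      obtain ⟨h1, h2⟩ := rowK1 r hr x y z hxy hyz
      rw [h1]
      congr 1
      simp only [WordRel] at h2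
      rcases h2 with h | ⟨x', y', z', hxy', hyz', hA, hB⟩ | ⟨x', y', z', hxy', hyz', hA, hB⟩
      · rw [h]
      · rw [hA, hB]; exact (ih hgt).1 x' y' z' hxy' hyz'
      · rw [hA, hB]; exact (ih hgt).2 x' y' z' hxy' hyz'
    · intro x y z hxy hyz
      rw [_root_.foldl_cons, _root_.foldl_cons]
      obtain ⟨h1, h2⟩ := rowK2 r hr x y z hxy hyz
      rw [h1]
      congr 1
      simp only [WordRel] at h2
      rcases h2 with h | ⟨x', y', z', hxy', hyz', hA, hB⟩ | ⟨x', y', z', hxy', hyz', hA, hB⟩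
      · rw [h]
      · rw [hA, hB]; exact (ih hgt).1 x' y' z' hxy' hyz'
      · rw [hA, hB]; exact (ih hgt).2 x' y' z' hxy' hyz'

lemma good_insertTableau : ∀ t : List (List ℕ), (∀ r ∈ t, r.Pairwise (· ≤ ·)) → ∀ x : ℕ,
    ∀ r ∈ insertTableau t x, r.Pairwise (· ≤ ·) := by
  intro t
  induction t with
  | nil => intro _ x r hrm; simp [insertTableau] at hrm; simp [hrm]
  | cons s t ih =>
    intro hg x r hrm
    have hs : s.Pairwise (· ≤ ·) := hg s (by simp)
    have hgt : ∀ u ∈ t, u.Pairwise (· ≤ ·) := fun u hu => hg u (by simp [hu])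
    rcases hb : (insertRow s x).2 with _ | c
    · rw [show insertTableau (s :: t) x = (insertRow s x).1 :: t from by simp [insertTableau, hb]]
        at hrm
      rcases List.mem_cons.1 hrm with h | h
      · subst h; exact insertRow_sorted hs x
      · exact hgt r h
    · rw [show insertTableau (s :: t) x = (insertRow s x).1 :: insertTableau t c from by
        simp [insertTableau, hb]] at hrm
      rcases List.mem_cons.1 hrm with h | h
      · subst h; exact insertRow_sorted hs x
      · exact ih hgt c r h

lemma good_foldl : ∀ (w : List ℕ) (t : List (List ℕ)), (∀ r ∈ t, r.Pairwise (· ≤ ·)) →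
    ∀ r ∈ w.foldl insertTableau t, r.Pairwise (· ≤ ·) := by
  intro w
  induction w with
  | nil => intro t ht; simpa using ht
  | cons a w ih => intro t ht; exact ih _ (good_insertTableau t ht a)

lemma good_Tab (w : List ℕ) : ∀ r ∈ Tab w, r.Pairwise (· ≤ ·) :=
  good_foldl w [] (by simp)

lemma Tab_append (u v : List ℕ) : Tab (u ++ v) = v.foldl insertTableau (Tab u) := by
  simp [Tab, List.foldl_append]

lemma tab_step {u v : List ℕ} (h : KnuthStep u v) : Tab u = Tab v := by
  cases h with
  | k1 u v x y z h1 h2 =>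
    rw [show u ++ y :: z :: x :: v = (u ++ [y, z, x]) ++ v by simp,
      show u ++ y :: x :: z :: v = (u ++ [y, x, z]) ++ v by simp,
      Tab_append, Tab_append, Tab_append, Tab_append]
    congr 1
    exact (key (Tab u) (good_Tab u)).1 x y z h1 h2
  | k2 u v x y z h1 h2 =>
    rw [show u ++ x :: z :: y :: v = (u ++ [x, z, y]) ++ v by simp,
      show u ++ z :: x :: y :: v = (u ++ [z, x, y]) ++ v by simp,
      Tab_append, Tab_append, Tab_append, Tab_append]
    congr 1
    exact (key (Tab u) (good_Tab u)).2 x y z h1 h2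

/-- Knuth equivalent words have the same insertion tableau (P-symbol). -/
theorem tab_eq_of_knuthEquiv (u v : List ℕ) (h : KnuthEquiv u v) :
    Tab u = Tab v := by
  induction h with
  | rel _ _ h => exact tab_step h
  | refl => rfl
  | symm _ _ _ ih => exact ih.symm
  | trans _ _ _ _ _ ih1 ih2 => exact ih1.trans ih2
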